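/- Under the same Lipschitz assumptions on v, with Euler point x_{k+1} = x_k + Δt·v(t_k, x_k) and reuse point x̂_{k+1} = x_k + Δt·v(t_{k-1}, x_{k-1}), where x_k = x_{k-1} + Δt·v(t_{k-1}, x_{k-1}) and t_k = t_{k-1} - Δt, the single-step reuse error satisfies ‖x_{k+1} - x̂_{k+1}‖ ≤ Δt² · (L_t + L_x·‖v(t_{k-1}, x_{k-1})‖), i.e., the reuse error is of order O(Δt²). -/
import Mathlib


theorem stmt1 {E : Type*} [NormedAddCommGroup E] [NormedSpace ℝ E]
    (v : ℝ → E → E) (Lx Lt : ℝ) (hLx : 0 ≤ Lx) (hLt : 0 ≤ Lt)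
    (hvx : ∀ t x x', ‖v t x - v t x'‖ ≤ Lx * ‖x - x'‖)
    (hvt : ∀ t t' x, ‖v t x - v t' x‖ ≤ Lt * |t - t'|)
    (Δt : ℝ) (hΔt : 0 ≤ Δt)
    (tkm1 tk : ℝ) (xkm1 xk xk1 xhatk1 : E)
    (hxk : xk = xkm1 + Δt • v tkm1 xkm1)
    (htk : tk = tkm1 - Δt)
    (hxk1 : xk1 = xk + Δt • v tk xk)
    (hxhatk1 : xhatk1 = xk + Δt • v tkm1 xkm1) :
    ‖xk1 - xhatk1‖ ≤ Δt ^ 2 * (Lt + Lx * ‖v tkm1 xkm1‖) := by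
  have hdiff : xk1 - xhatk1 = Δt • (v tk xk - v tkm1 xkm1) := by
    rw [hxk1, hxhatk1, smul_sub]; abel
  have h1 : ‖v tk xk - v tkm1 xk‖ ≤ Lt * Δt := by
    simpa [htk, abs_of_nonneg hΔt] using hvt tk tkm1 xk
  have h2 : ‖v tkm1 xk - v tkm1 xkm1‖ ≤ Lx * (Δt * ‖v tkm1 xkm1‖) := by
    simpa [hxk, norm_smul, abs_of_nonneg hΔt, mul_assoc] using hvx tkm1 xk xkm1
  calc ‖xk1 - xhatk1‖ = Δt * ‖v tk xk - v tkm1 xkm1‖ := by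
        rw [hdiff, norm_smul, Real.norm_eq_abs, abs_of_nonneg hΔt]
    _ ≤ Δt * (‖v tk xk - v tkm1 xk‖ + ‖v tkm1 xk - v tkm1 xkm1‖) :=
        mul_le_mul_of_nonneg_left (norm_sub_le_norm_sub_add_norm_sub _ _ _) hΔt
    _ ≤ Δt * (Lt * Δt + Lx * (Δt * ‖v tkm1 xkm1‖)) :=
        mul_le_mul_of_nonneg_left (add_le_add h1 h2) hΔt
    _ = Δt ^ 2 * (Lt + Lx * ‖v tkm1 xkm1‖) := by ring
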